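/- Let λ > 0 and s ≥ (5λ + 1)/(6λ + 1). Let x be a non-dirty candidate with respect to threshold s in an election. Let r be a 3-wise median of the election such that every candidate z with z ≥_s x is ranked before x in r. Suppose |{z : x is ranked before z in r}| ≥ λ·|{z ≠ x : z ≥_s x}|. Then for every candidate y ≠ x with x ≥_s y, x is ranked before y in r. -/

import Mathlib

open Finset

/-- A ranking (strict total order) of the finite candidate set `C`, encoded as a
bijection with `Fin (Fintype.card C)`; position `0` is the top of the ranking. -/
abbrev Ranking (C : Type*) [Fintype C] := C ≃ Fin (Fintype.card C)

section Defs

variable {C : Type*} [Fintype C] [DecidableEq C]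

/-- `x` is ranked (strictly) before `y` in the ranking `π`. -/
def Before (π : Ranking C) (x y : C) : Prop := π x < π y

instance (π : Ranking C) (x y : C) : Decidable (Before π x y) :=
  inferInstanceAs (Decidable (π x < π y))

instance : DecidableEq (Ranking C) := fun a b =>
  decidable_of_iff (∀ i, a i = b i) Equiv.ext_iff.symm

/-- The top-ranked element of `S ⊆ C` according to `π` (`⊤` if `S = ∅`). -/
def topS (π : Ranking C) (S : Finset C) : WithTop C :=
  (S.image π).min.map (fun i => π.symm i)

/-- The `k`-wise Kendall-tau distance between two rankings: the number of subsets
`S ⊆ C` with `|S| ≤ k` on whose top element the two rankings disagree (subsets of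
size at most one never contribute). -/
def kDist (k : ℕ) (π σ : Ranking C) : ℕ :=
  ((Finset.univ : Finset C).powerset.filter
    (fun S => S.card ≤ k ∧ topS π S ≠ topS σ S)).card

/-- The `k`-wise Kendall-tau distance from a ranking to a voting profile. -/
def kDistV (k : ℕ) (π : Ranking C) (V : Multiset (Ranking C)) : ℕ :=
  (V.map (fun σ => kDist k π σ)).sum

/-- `π` is a `k`-wise median (for `k = 2`: a Kemeny ranking) of the profile `V`. -/
def IsKMedian (k : ℕ) (V : Multiset (Ranking C)) (π : Ranking C) : Prop :=
  ∀ σ : Ranking C, kDistV k π V ≤ kDistV k σ V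

/-- The number of votes of `V` in which `x` is ranked before `y`. -/
def votesBefore (V : Multiset (Ranking C)) (x y : C) : ℕ :=
  Multiset.card (V.filter (fun v => Before v x y))

/-- `x ≥ₛ y` : `x` is ranked before `y` in at least `s·|V|` of the votes. -/
def AtLeastRatio (V : Multiset (Ranking C)) (s : ℝ) (x y : C) : Prop :=
  s * (Multiset.card V : ℝ) ≤ (votesBefore V x y : ℝ)

/-- `x >ₛ y` : `x` is ranked before `y` in more than `s·|V|` of the votes. -/
def MoreThanRatio (V : Multiset (Ranking C)) (s : ℝ) (x y : C) : Prop :=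
  s * (Multiset.card V : ℝ) < (votesBefore V x y : ℝ)

noncomputable instance (V : Multiset (Ranking C)) (s : ℝ) (x y : C) :
    Decidable (AtLeastRatio V s x y) :=
  inferInstanceAs (Decidable (s * (Multiset.card V : ℝ) ≤ (votesBefore V x y : ℝ)))

/-- `x` is a non-dirty candidate w.r.t. threshold `s`. -/
def NonDirty (V : Multiset (Ranking C)) (s : ℝ) (x : C) : Prop :=
  ∀ y : C, y ≠ x → AtLeastRatio V s x y ∨ AtLeastRatio V s y x

/-- `x` is ranked first (is the winner) in the ranking `π`. -/
def RankedFirst (π : Ranking C) (x : C) : Prop :=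
  ∀ y : C, y ≠ x → Before π x y

instance (π : Ranking C) (x : C) : Decidable (RankedFirst π x) :=
  inferInstanceAs (Decidable (∀ y : C, y ≠ x → Before π x y))

end Defs

/-!
Suppose the claim fails, and let `y` be the lowest-ranked candidate above `x` with `x ≥ₛ y`.
Non-dirtiness and the choice of `y` give `b ≥ₛ x` for each `b` strictly between `y` and `x`, and
`x ≥ₛ d` for each `d` below `x`. Chaining two such majorities, each of `x` and the `b`'s is placed
before `y`, and before each candidate from `x` downwards, in at least `(2s - 1)|V|` votes
(`MoveMargin`).

Move `y` to just below `x`. A set `S` with `|S| ≤ 3` changes its top only if its top was `y` and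
it contains `x` or some `b`; the 3-wise distance then drops by at least `(4s - 3)|V|` on `{y, x}`
and by at least `(6s - 5)|V|` on every `{y, b, d}`, and it does not grow on any other such set
except the `{y, b, b'}`, each of which costs at most `2(1 - s)|V|`. With `k` candidates between
`y` and `x` and `m` below `x`, the net drop is at least `(4s - 3)|V| + ((6s - 5)km - (1 - s)k²)|V|`,
which is positive because `λk ≤ m` and `1 - s ≤ λ(6s - 5)`: this contradicts the minimality of `r`.
-/

section Ranking

variable {C : Type*} [Fintype C] {π : Ranking C} {a b c : C}

lemma Before.trans (hab : Before π a b) (hbc : Before π b c) : Before π a c :=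
  lt_trans hab hbc

lemma Before.ne (hab : Before π a b) : a ≠ b := by
  rintro rfl
  exact lt_irrefl _ hab

lemma Before.not_before (hab : Before π a b) : ¬ Before π b a :=
  lt_asymm hab

lemma not_before_iff (hab : a ≠ b) : ¬ Before π a b ↔ Before π b a :=
  not_lt.trans (Ne.le_iff_lt fun h => hab (π.injective h.symm))

lemma exists_ranking_before_iff {α : Type*} [LinearOrder α] (f : C → α)
    (hf : Function.Injective f) : ∃ π : Ranking C, ∀ a b, Before π a b ↔ f a < f b := by
  let : LinearOrder C := LinearOrder.lift' f hf
  exact ⟨(Fintype.orderIsoFinOfCardEq C rfl).symm.toEquiv,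
    fun a b => (Fintype.orderIsoFinOfCardEq C rfl).symm.lt_iff_lt⟩

lemma topS_eq_coe_iff (π : Ranking C) (S : Finset C) (m : C) :
    topS π S = m ↔ m ∈ S ∧ ∀ z ∈ S, z ≠ m → Before π m z := by
  unfold topS Before
  constructor
  · intro h
    obtain ⟨i, hi, him⟩ : ∃ i : Fin (Fintype.card C),
        (S.image π).min = (i : WithTop _) ∧ π.symm i = m := by
      cases hmin : (S.image π).min with
      | top => simp [hmin] at h
      | coe i => exact ⟨i, rfl, by simpa [hmin] using h⟩
    obtain rfl : i = π m := by rw [← him, Equiv.apply_symm_apply]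
    refine ⟨by simpa using Finset.mem_of_min hi, fun z hz hzm => ?_⟩
    refine lt_of_le_of_ne ?_ fun h => hzm (π.injective h).symm
    simpa using Finset.min_le_of_eq (Finset.mem_image_of_mem π hz) hi
  · rintro ⟨hm, hmin⟩
    have : (S.image π).min = π m := by
      refine le_antisymm (Finset.min_le (Finset.mem_image_of_mem π hm)) (Finset.le_min ?_)
      simp only [Finset.mem_image, forall_exists_index, and_imp]
      rintro _ z hz rfl
      rcases eq_or_ne z m with rfl | hzm
      · exact le_rfl
      · exact WithTop.coe_le_coe.2 (hmin z hz hzm).le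
    simp [this]

lemma exists_topS_eq_coe (π : Ranking C) {S : Finset C} (hS : S.Nonempty) :
    ∃ m : C, topS π S = m := by
  obtain ⟨m, hm, hmin⟩ := S.exists_min_image π hS
  exact ⟨m, (topS_eq_coe_iff π S m).2
    ⟨hm, fun z hz hzm => lt_of_le_of_ne (hmin z hz) fun h => hzm (π.injective h).symm⟩⟩

variable {V : Multiset (Ranking C)}

lemma votesBefore_le_card : votesBefore V a b ≤ Multiset.card V :=
  Multiset.card_le_card (Multiset.filter_le _ _)

lemma votesBefore_add_votesBefore (hab : a ≠ b) :
    votesBefore V a b + votesBefore V b a = Multiset.card V := by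
  have : V.filter (fun σ => Before σ b a) = V.filter (fun σ => ¬ Before σ a b) :=
    Multiset.filter_congr fun σ _ => (not_before_iff hab).symm
  rw [votesBefore, votesBefore, this, ← Multiset.card_add, Multiset.filter_add_not]

lemma votesBefore_add_votesBefore_le (a b c : C) :
    votesBefore V a b + votesBefore V b c ≤ votesBefore V a c + Multiset.card V := by
  have hsum := congrArg Multiset.card
    (Multiset.filter_add_filter (fun σ => Before σ b c) (p := fun σ => Before σ a b) V)
  have hand : V.filter (fun σ => Before σ a b ∧ Before σ b c) ≤ V.filter (fun σ => Before σ a c) :=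
    Multiset.monotone_filter_right V fun σ h => h.1.trans h.2
  rw [Multiset.card_add, Multiset.card_add] at hsum
  have := Multiset.card_le_card hand
  have := Multiset.card_le_card (Multiset.filter_le (fun σ => Before σ a b ∨ Before σ b c) V)
  unfold votesBefore
  omega

lemma two_mul_sub_one_mul_card_le_votesBefore {s : ℝ} {u x z : C} (hs : s ≤ 1)
    (hu : u = x ∨ AtLeastRatio V s u x) (hz : z = x ∨ AtLeastRatio V s x z) (huz : u ≠ z) :
    (2 * s - 1) * Multiset.card V ≤ votesBefore V u z := by
  have hn := (Multiset.card V).cast_nonneg (α := ℝ)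
  have hweak : ∀ {a b : C}, AtLeastRatio V s a b →
      (2 * s - 1) * Multiset.card V ≤ votesBefore V a b :=
    fun h => by
      unfold AtLeastRatio at h
      nlinarith
  rcases hu with rfl | hu
  · exact hweak (hz.resolve_left huz.symm)
  rcases hz with rfl | hz
  · exact hweak hu
  have : (votesBefore V u x : ℝ) + votesBefore V x z ≤ votesBefore V u z + Multiset.card V := by
    exact_mod_cast votesBefore_add_votesBefore_le u x z
  unfold AtLeastRatio at hu hz
  linarith

lemma le_one_of_atLeastRatio {s : ℝ} (hV : V ≠ 0) (h : AtLeastRatio V s a b) : s ≤ 1 := by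
  have hn : (0 : ℝ) < Multiset.card V := by exact_mod_cast Multiset.card_pos.2 hV
  have : (votesBefore V a b : ℝ) ≤ Multiset.card V := by exact_mod_cast votesBefore_le_card
  unfold AtLeastRatio at h
  nlinarith

end Ranking

section Margin

variable {C : Type*} [Fintype C] {V : Multiset (Ranking C)} {s : ℝ} {r : Ranking C} {y x : C}

def MoveMargin (V : Multiset (Ranking C)) (s : ℝ) (r : Ranking C) (y x : C) : Prop :=
  ∀ u z, Before r y u → ¬ Before r x u → (z = y ∨ ¬ Before r z x) → u ≠ z →
    (2 * s - 1) * Multiset.card V ≤ votesBefore V u z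

lemma moveMargin_of_atLeastRatio (hs : s ≤ 1) (hxy : AtLeastRatio V s x y)
    (hbetween : ∀ u, Before r y u → ¬ Before r x u → u = x ∨ AtLeastRatio V s u x)
    (hbelow : ∀ d, Before r x d → AtLeastRatio V s x d) : MoveMargin V s r y x := by
  intro u z hyu hxu hz huz
  refine two_mul_sub_one_mul_card_le_votesBefore hs (hbetween u hyu hxu) ?_ huz
  rcases hz with rfl | hzx
  · exact Or.inr hxy
  · exact (eq_or_ne z x).imp_right fun hzx' => hbelow z ((not_before_iff hzx').1 hzx)

end Margin

section Moves

variable {C : Type*} [Fintype C] [DecidableEq C]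

lemma exists_moveAfter (r : Ranking C) (y x : C) : ∃ π : Ranking C,
    (∀ a b, a ≠ y → b ≠ y → (Before π a b ↔ Before r a b)) ∧
      ∀ z, z ≠ y → (Before π y z ↔ Before r x z) := by
  let key : C → ℕ := fun z => if z = y then 2 * (r x : ℕ) + 1 else 2 * (r z : ℕ)
  have hkey : Function.Injective key := by
    intro a b h
    simp only [key] at h
    split_ifs at h with ha hb hb
    · exact ha.trans hb.symm
    · omega
    · omega
    · exact r.injective (Fin.ext (by omega))
  obtain ⟨π, hπ⟩ := exists_ranking_before_iff key hkey
  refine ⟨π, fun a b ha hb => ?_, fun z hz => ?_⟩ <;> rw [hπ]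
  · simp only [key, ha, hb, if_false, Before, Fin.lt_def]
    omega
  · simp only [key, hz, if_true, if_false, Before, Fin.lt_def]
    omega

/-- The ranking `r` with `y` moved to the position just below `x`. -/
noncomputable def moveAfter (r : Ranking C) (y x : C) : Ranking C :=
  (exists_moveAfter r y x).choose

variable {r : Ranking C} {a b c y x z : C}

lemma before_moveAfter_iff (ha : a ≠ y) (hb : b ≠ y) :
    Before (moveAfter r y x) a b ↔ Before r a b :=
  (exists_moveAfter r y x).choose_spec.1 a b ha hb

lemma before_moveAfter_left_iff (hz : z ≠ y) : Before (moveAfter r y x) y z ↔ Before r x z :=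
  (exists_moveAfter r y x).choose_spec.2 z hz

lemma before_moveAfter_right_iff (hz : z ≠ y) :
    Before (moveAfter r y x) z y ↔ ¬ Before r x z := by
  rw [← before_moveAfter_left_iff hz, not_before_iff hz.symm]

variable {V : Multiset (Ranking C)}

def votesTop (V : Multiset (Ranking C)) (S : Finset C) (c : WithTop C) : ℕ :=
  V.countP (fun σ => topS σ S = c)

lemma votesTop_pair (hab : a ≠ b) : votesTop V {a, b} a = votesBefore V a b := by
  rw [votesTop, Multiset.countP_eq_card_filter, votesBefore]
  congr 1
  exact Multiset.filter_congr fun σ _ => by simp [topS_eq_coe_iff, hab.symm]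

lemma votesTop_le_votesBefore {S : Finset C} (hb : b ∈ S) (hba : b ≠ a) :
    votesTop V S a ≤ votesBefore V a b := by
  rw [votesTop, Multiset.countP_eq_card_filter, votesBefore]
  exact Multiset.card_le_card <| Multiset.monotone_filter_right V fun σ h =>
    ((topS_eq_coe_iff σ S a).1 h).2 b hb hba

lemma votesBefore_add_votesBefore_le_votesTop (a b c : C) :
    votesBefore V a b + votesBefore V a c ≤ votesTop V {a, b, c} a + Multiset.card V := by
  have hsum := congrArg Multiset.card
    (Multiset.filter_add_filter (fun σ => Before σ a c) (p := fun σ => Before σ a b) V)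
  have hand : V.filter (fun σ => Before σ a b ∧ Before σ a c) ≤
      V.filter (fun σ => topS σ {a, b, c} = a) :=
    Multiset.monotone_filter_right V fun σ h => by
      simp [topS_eq_coe_iff, h.1, h.2]
  rw [Multiset.card_add, Multiset.card_add] at hsum
  have := Multiset.card_le_card hand
  have := Multiset.card_le_card (Multiset.filter_le (fun σ => Before σ a b ∨ Before σ a c) V)
  rw [votesTop, Multiset.countP_eq_card_filter]
  unfold votesBefore
  omega

lemma kDistV_eq_sum (k : ℕ) (π : Ranking C) (V : Multiset (Ranking C)) :
    (kDistV k π V : ℝ) = ∑ S ∈ univ.powerset.filter (fun S : Finset C => S.card ≤ k),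
      ((Multiset.card V : ℝ) - votesTop V S (topS π S)) := by
  induction V using Multiset.induction_on with
  | empty => simp [kDistV, votesTop]
  | cons σ V ih =>
    have hσ : (kDist k π σ : ℝ) = ∑ S ∈ univ.powerset.filter (fun S : Finset C => S.card ≤ k),
        (1 - if topS σ S = topS π S then 1 else 0 : ℝ) := by
      rw [kDist, ← Finset.filter_filter, Finset.card_filter]
      push_cast
      refine Finset.sum_congr rfl fun S _ => ?_
      split_ifs with h₁ h₂ <;> simp_all [eq_comm]
    simp only [kDistV, Multiset.map_cons, Multiset.sum_cons, Nat.cast_add] at ih ⊢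
    rw [ih, hσ, ← Finset.sum_add_distrib]
    refine Finset.sum_congr rfl fun S _ => ?_
    simp only [votesTop, Multiset.countP_cons, Multiset.card_cons]
    push_cast
    ring

def subsetGain (V : Multiset (Ranking C)) (π σ : Ranking C) (S : Finset C) : ℝ :=
  (votesTop V S (topS σ S) : ℝ) - votesTop V S (topS π S)

lemma kDistV_sub_kDistV (k : ℕ) (π σ : Ranking C) (V : Multiset (Ranking C)) :
    (kDistV k π V : ℝ) - kDistV k σ V =
      ∑ S ∈ univ.powerset.filter (fun S : Finset C => S.card ≤ k), subsetGain V π σ S := by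
  rw [kDistV_eq_sum, kDistV_eq_sum, ← Finset.sum_sub_distrib]
  exact Finset.sum_congr rfl fun S _ => by rw [subsetGain]; ring

lemma topS_moveAfter_of_overtaken {S : Finset C} {t : C} (hy : y ∈ S) (ht : t ∈ S)
    (hyt : Before r y t) (hxt : ¬ Before r x t) (htS : ∀ z ∈ S, z ≠ y → z ≠ t → Before r t z) :
    topS r S = y ∧ topS (moveAfter r y x) S = t := by
  refine ⟨(topS_eq_coe_iff r S y).2 ⟨hy, fun z hz hzy => ?_⟩,
    (topS_eq_coe_iff _ S t).2 ⟨ht, fun z hz hzt => ?_⟩⟩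
  · rcases eq_or_ne z t with rfl | hzt
    · exact hyt
    · exact hyt.trans (htS z hz hzy hzt)
  · rcases eq_or_ne z y with rfl | hzy
    · exact (before_moveAfter_right_iff hyt.ne.symm).2 hxt
    · exact (before_moveAfter_iff hyt.ne.symm hzy).2 (htS z hz hzy hzt)

lemma topS_moveAfter_eq_or (hyx : Before r y x) (S : Finset C) :
    topS (moveAfter r y x) S = topS r S ∨ ∃ t ∈ S, y ∈ S ∧ Before r y t ∧ ¬ Before r x t ∧
      ∀ z ∈ S, z ≠ y → z ≠ t → Before r t z := by
  rcases S.eq_empty_or_nonempty with rfl | hS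
  · exact Or.inl rfl
  obtain ⟨m, hm⟩ := exists_topS_eq_coe r hS
  have hm' := (topS_eq_coe_iff r S m).1 hm
  rcases eq_or_ne m y with rfl | hmy
  · by_cases hbelow : ∀ z ∈ S, z ≠ m → Before r x z
    · refine Or.inl (hm ▸ (topS_eq_coe_iff _ S m).2 ⟨hm'.1, fun z hz hzm => ?_⟩)
      exact (before_moveAfter_left_iff hzm).2 (hbelow z hz hzm)
    push Not at hbelow
    obtain ⟨c, hc, hcm, hxc⟩ := hbelow
    obtain ⟨t, ht⟩ := exists_topS_eq_coe r ⟨c, mem_erase.2 ⟨hcm, hc⟩⟩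
    obtain ⟨ht, htmin⟩ := (topS_eq_coe_iff r _ t).1 ht
    have hxt : ¬ Before r x t := by
      rcases eq_or_ne c t with rfl | hct
      · exact hxc
      · exact fun hxt => hxc (hxt.trans (htmin c (mem_erase.2 ⟨hcm, hc⟩) hct))
    refine Or.inr ⟨t, mem_of_mem_erase ht, hm'.1,
      hm'.2 t (mem_of_mem_erase ht) (ne_of_mem_erase ht), hxt,
      fun z hz hzm hzt => htmin z (mem_erase.2 ⟨hzm, hz⟩) hzt⟩
  · refine Or.inl (hm ▸ (topS_eq_coe_iff _ S m).2 ⟨hm'.1, fun z hz hzm => ?_⟩)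
    rcases eq_or_ne z y with rfl | hzy
    · exact (before_moveAfter_right_iff hmy).2 ((hm'.2 z hz hzm).trans hyx).not_before
    · exact (before_moveAfter_iff hmy hzy).2 (hm'.2 z hz hzm)

end Moves

section Gain

variable {C : Type*} [Fintype C] [DecidableEq C] {V : Multiset (Ranking C)} {s : ℝ}
  {r : Ranking C} {y x t z : C}

lemma subsetGain_pair (hm : MoveMargin V s r y x) (hyt : Before r y t) (hxt : ¬ Before r x t) :
    (4 * s - 3) * Multiset.card V ≤ subsetGain V r (moveAfter r y x) {y, t} := by
  obtain ⟨hr, hr'⟩ := topS_moveAfter_of_overtaken (S := {y, t}) (by simp) (by simp) hyt hxt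
    (by simp +contextual)
  have hty := hm t y hyt hxt (Or.inl rfl) hyt.ne.symm
  have hsum : (votesBefore V t y : ℝ) + votesBefore V y t = Multiset.card V := by
    exact_mod_cast votesBefore_add_votesBefore hyt.ne.symm
  have htop : votesTop V {y, t} t = votesBefore V t y := by
    rw [pair_comm]
    exact votesTop_pair hyt.ne.symm
  rw [subsetGain, hr, hr', htop, votesTop_pair hyt.ne]
  linarith

lemma subsetGain_triple (hm : MoveMargin V s r y x) (hyt : Before r y t) (hxt : ¬ Before r x t)
    (htz : Before r t z) (hzx : ¬ Before r z x) :
    (6 * s - 5) * Multiset.card V ≤ subsetGain V r (moveAfter r y x) {y, t, z} := by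
  obtain ⟨hr, hr'⟩ := topS_moveAfter_of_overtaken (S := {y, t, z}) (by simp) (by simp) hyt hxt
    (by simp +contextual [htz])
  have hty := hm t y hyt hxt (Or.inl rfl) hyt.ne.symm
  have htz' := hm t z hyt hxt (Or.inr hzx) htz.ne
  have hsum : (votesBefore V t y : ℝ) + votesBefore V y t = Multiset.card V := by
    exact_mod_cast votesBefore_add_votesBefore hyt.ne.symm
  have htop : (votesBefore V t y : ℝ) + votesBefore V t z ≤
      votesTop V {y, t, z} t + Multiset.card V := by
    rw [insert_comm]
    exact_mod_cast votesBefore_add_votesBefore_le_votesTop t y z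
  have hytop : (votesTop V {y, t, z} y : ℝ) ≤ votesBefore V y t := by
    exact_mod_cast votesTop_le_votesBefore (by simp) hyt.ne.symm
  rw [subsetGain, hr, hr']
  linarith

lemma subsetGain_inner (hm : MoveMargin V s r y x) (hyt : Before r y t) (hxt : ¬ Before r x t)
    (hyz : Before r y z) :
    -(2 * (1 - s) * Multiset.card V) ≤ subsetGain V r (moveAfter r y x) {y, t, z} := by
  have hr : topS r {y, t, z} = y :=
    (topS_eq_coe_iff r _ y).2 ⟨by simp, by simp +contextual [hyt, hyz]⟩
  have hty := hm t y hyt hxt (Or.inl rfl) hyt.ne.symm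
  have hsum : (votesBefore V t y : ℝ) + votesBefore V y t = Multiset.card V := by
    exact_mod_cast votesBefore_add_votesBefore hyt.ne.symm
  have hytop : (votesTop V {y, t, z} y : ℝ) ≤ votesBefore V y t := by
    exact_mod_cast votesTop_le_votesBefore (by simp) hyt.ne.symm
  have := (votesTop V {y, t, z} (topS (moveAfter r y x) {y, t, z})).cast_nonneg (α := ℝ)
  rw [subsetGain, hr]
  linarith

def candidatesBetween (r : Ranking C) (y x : C) : Finset C :=
  univ.filter fun b => Before r y b ∧ Before r b x

def crossTriples (r : Ranking C) (y x : C) : Finset (Finset C) :=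
  (candidatesBetween r y x ×ˢ univ.filter (fun d => Before r x d)).image fun p => {y, p.1, p.2}

def innerTriples (r : Ranking C) (y x : C) : Finset (Finset C) :=
  ((candidatesBetween r y x).powersetCard 2).image (insert y)

lemma subsetGain_nonneg (hyx : Before r y x) (hm : MoveMargin V s r y x) (hs : 5 / 6 ≤ s)
    {S : Finset C} (hS : S.card ≤ 3) (hSi : S ∉ innerTriples r y x) :
    0 ≤ subsetGain V r (moveAfter r y x) S := by
  have hn := (Multiset.card V).cast_nonneg (α := ℝ)
  rcases topS_moveAfter_eq_or hyx S with h | ⟨t, ht, hy, hyt, hxt, htS⟩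
  · simp [subsetGain, h]
  by_cases hz : ∃ z ∈ S, z ≠ y ∧ z ≠ t
  · obtain ⟨z, hz, hzy, hzt⟩ := hz
    have htz := htS z hz hzy hzt
    obtain rfl : S = {y, t, z} := by
      refine (eq_of_subset_of_card_le (by simp [insert_subset_iff, hy, ht, hz]) ?_).symm
      rw [card_eq_three.2 ⟨y, t, z, hyt.ne, hzy.symm, hzt.symm, rfl⟩]
      exact hS
    by_cases hzx : Before r z x
    · refine absurd (mem_image.2 ⟨{t, z}, mem_powersetCard.2 ⟨?_, card_pair htz.ne⟩, rfl⟩) hSi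
      simp [insert_subset_iff, candidatesBetween, hyt, htz.trans hzx, hyt.trans htz, hzx]
    · nlinarith [subsetGain_triple hm hyt hxt htz hzx]
  · push Not at hz
    obtain rfl : S = {y, t} := by
      ext z
      simp only [mem_insert, mem_singleton]
      exact ⟨fun hzS => (eq_or_ne z y).imp_right (hz z hzS), by rintro (rfl | rfl) <;> assumption⟩
    nlinarith [subsetGain_pair hm hyt hxt]

lemma sum_subsetGain_crossTriples (hm : MoveMargin V s r y x) :
    (6 * s - 5) * Multiset.card V *
        ((candidatesBetween r y x).card * (univ.filter fun d => Before r x d).card) ≤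
      ∑ S ∈ crossTriples r y x, subsetGain V r (moveAfter r y x) S := by
  rw [crossTriples, sum_image]
  · rw [← Nat.cast_mul, ← card_product, mul_comm, ← nsmul_eq_mul]
    refine card_nsmul_le_sum _ _ _ fun p hp => ?_
    simp only [mem_product, candidatesBetween, mem_filter, mem_univ, true_and] at hp
    obtain ⟨⟨hyb, hbx⟩, hxd⟩ := hp
    exact subsetGain_triple hm hyb hbx.not_before (hbx.trans hxd) hxd.not_before
  · rintro ⟨b, d⟩ hp ⟨b', d'⟩ hp' h
    simp only [coe_product, coe_filter, candidatesBetween, Set.mem_prod, Set.mem_ofPred_eq,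
      mem_univ, true_and] at hp hp' h
    have hb : b ∈ ({y, b', d'} : Finset C) := h ▸ by simp
    have hd : d ∈ ({y, b', d'} : Finset C) := h ▸ by simp
    simp only [mem_insert, mem_singleton] at hb hd
    obtain ⟨⟨hyb, hbx⟩, hxd⟩ := hp
    obtain ⟨⟨hyb', hbx'⟩, hxd'⟩ := hp'
    rcases hb with rfl | rfl | rfl
    · exact absurd rfl hyb.ne
    · rcases hd with rfl | rfl | rfl
      · exact absurd (hyb.trans (hbx.trans hxd)) (lt_irrefl _)
      · exact absurd hxd hbx.not_before
      · rfl
    · exact absurd hxd' hbx.not_before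

lemma sum_subsetGain_innerTriples (hm : MoveMargin V s r y x) (hs : s ≤ 1) :
    -((1 - s) * Multiset.card V * (candidatesBetween r y x).card ^ 2) ≤
      ∑ S ∈ innerTriples r y x, subsetGain V r (moveAfter r y x) S := by
  have hcard : ((innerTriples r y x).card : ℝ) ≤ (candidatesBetween r y x).card ^ 2 / 2 := by
    calc ((innerTriples r y x).card : ℝ) ≤ ((candidatesBetween r y x).powersetCard 2).card := by
          exact_mod_cast card_image_le
      _ = ((candidatesBetween r y x).card.choose 2 : ℝ) := by rw [card_powersetCard]
      _ ≤ _ := by simpa using Nat.choose_le_pow_div (α := ℝ) 2 (candidatesBetween r y x).card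
  have hbound : (innerTriples r y x).card • -(2 * (1 - s) * Multiset.card V) ≤
      ∑ S ∈ innerTriples r y x, subsetGain V r (moveAfter r y x) S := by
    refine card_nsmul_le_sum _ _ _ fun S hS => ?_
    obtain ⟨T, hT, rfl⟩ := mem_image.1 hS
    obtain ⟨hTB, hT2⟩ := mem_powersetCard.1 hT
    obtain ⟨b, b', -, rfl⟩ := card_eq_two.1 hT2
    simp only [insert_subset_iff, singleton_subset_iff, candidatesBetween, mem_filter, mem_univ,
      true_and] at hTB
    exact subsetGain_inner hm hTB.1.1 hTB.1.2.not_before hTB.2.1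
  have hweight : 0 ≤ 2 * (1 - s) * (Multiset.card V : ℝ) := by
    have := (Multiset.card V).cast_nonneg (α := ℝ)
    nlinarith
  rw [nsmul_eq_mul] at hbound
  nlinarith [mul_le_mul_of_nonneg_left hcard hweight]

lemma notMem_of_mem_crossTriples (hyx : Before r y x) {S : Finset C}
    (hS : S ∈ crossTriples r y x) : x ∉ S := by
  obtain ⟨⟨b, d⟩, hp, rfl⟩ := mem_image.1 hS
  simp only [mem_product, candidatesBetween, mem_filter, mem_univ, true_and] at hp
  simp only [mem_insert, mem_singleton, not_or]
  exact ⟨hyx.ne.symm, hp.1.2.ne.symm, hp.2.ne⟩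

lemma notMem_of_mem_innerTriples (hyx : Before r y x) {S : Finset C}
    (hS : S ∈ innerTriples r y x) : x ∉ S := by
  obtain ⟨T, hT, rfl⟩ := mem_image.1 hS
  rw [mem_insert, not_or]
  exact ⟨hyx.ne.symm, fun hxT => (mem_filter.1 ((mem_powersetCard.1 hT).1 hxT)).2.2.ne rfl⟩

lemma disjoint_crossTriples_innerTriples (hyx : Before r y x) :
    Disjoint (crossTriples r y x) (innerTriples r y x) := by
  simp only [disjoint_left, crossTriples, innerTriples, mem_image, mem_product,
    mem_powersetCard, not_exists, not_and]
  rintro S ⟨⟨b, d⟩, ⟨-, hd⟩, rfl⟩ T ⟨hT, -⟩ hST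
  simp only [mem_filter, mem_univ, true_and] at hd
  have hdT : d ∈ insert y T := hST ▸ by simp
  rcases mem_insert.1 hdT with rfl | hdT
  · exact hyx.not_before hd
  · exact hd.not_before (mem_filter.1 (hT hdT)).2.2

lemma sum_subsetGain_ge (hyx : Before r y x) (hm : MoveMargin V s r y x) (hs : 5 / 6 ≤ s)
    (hs1 : s ≤ 1) :
    (4 * s - 3) * Multiset.card V + (6 * s - 5) * Multiset.card V *
        ((candidatesBetween r y x).card * (univ.filter fun d => Before r x d).card) -
        (1 - s) * Multiset.card V * (candidatesBetween r y x).card ^ 2 ≤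
      ∑ S ∈ univ.powerset.filter (fun S : Finset C => S.card ≤ 3),
        subsetGain V r (moveAfter r y x) S := by
  have hsub : insert {y, x} (crossTriples r y x ∪ innerTriples r y x) ⊆
      univ.powerset.filter (fun S : Finset C => S.card ≤ 3) := by
    have hP3 : ∀ S : Finset C, S.card ≤ 3 →
        S ∈ univ.powerset.filter (fun S : Finset C => S.card ≤ 3) :=
      fun S hS => mem_filter.2 ⟨mem_powerset.2 (subset_univ S), hS⟩
    refine insert_subset (hP3 _ (card_le_two.trans (by norm_num))) (union_subset ?_ ?_)
    · exact image_subset_iff.2 fun _ _ => hP3 _ card_le_three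
    · refine image_subset_iff.2 fun T hT => hP3 _ ((card_insert_le y T).trans ?_)
      rw [(mem_powersetCard.1 hT).2]
  calc _ ≤ subsetGain V r (moveAfter r y x) {y, x} +
        (∑ S ∈ crossTriples r y x, subsetGain V r (moveAfter r y x) S +
          ∑ S ∈ innerTriples r y x, subsetGain V r (moveAfter r y x) S) := by
        linarith [subsetGain_pair hm hyx (lt_irrefl _), sum_subsetGain_crossTriples hm,
          sum_subsetGain_innerTriples hm hs1]
    _ = ∑ S ∈ insert {y, x} (crossTriples r y x ∪ innerTriples r y x),
          subsetGain V r (moveAfter r y x) S := by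
        have hxy : {y, x} ∉ crossTriples r y x ∪ innerTriples r y x := fun h =>
          (mem_union.1 h).elim (notMem_of_mem_crossTriples hyx · (by simp))
            (notMem_of_mem_innerTriples hyx · (by simp))
        rw [sum_insert hxy, sum_union (disjoint_crossTriples_innerTriples hyx)]
    _ ≤ _ := sum_le_sum_of_subset_of_nonneg hsub fun S hS hS' =>
        subsetGain_nonneg hyx hm hs (mem_filter.1 hS).2
          fun h => hS' (mem_insert_of_mem (mem_union_right _ h))

lemma kDistV_moveAfter_lt (hV : V ≠ 0) (hyx : Before r y x) (hm : MoveMargin V s r y x)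
    (hs1 : s ≤ 1) {lam : ℝ} (hlam : 0 < lam) (hs : (5 * lam + 1) / (6 * lam + 1) ≤ s)
    (hBD : lam * (candidatesBetween r y x).card ≤ (univ.filter fun d => Before r x d).card) :
    kDistV 3 (moveAfter r y x) V < kDistV 3 r V := by
  have hn : (0 : ℝ) < Multiset.card V := by exact_mod_cast Multiset.card_pos.2 hV
  have hls : 1 - s ≤ lam * (6 * s - 5) := by
    rw [div_le_iff₀ (by linarith)] at hs
    linarith
  have hs56 : 5 / 6 < s := by nlinarith
  set k : ℝ := ((candidatesBetween r y x).card : ℝ)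
  set m : ℝ := ((univ.filter fun d => Before r x d).card : ℝ)
  have hk : 0 ≤ k := Nat.cast_nonneg _
  have hinner : (1 - s) * k ^ 2 ≤ (6 * s - 5) * (k * m) := by
    nlinarith [mul_le_mul_of_nonneg_right hls (sq_nonneg k),
      mul_le_mul_of_nonneg_left hBD (by nlinarith : 0 ≤ (6 * s - 5) * k)]
  have hgain : 0 < (kDistV 3 r V : ℝ) - kDistV 3 (moveAfter r y x) V := by
    rw [kDistV_sub_kDistV]
    nlinarith [sum_subsetGain_ge hyx hm hs56.le hs1, mul_le_mul_of_nonneg_left hinner hn.le]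
  exact_mod_cast sub_pos.1 hgain

end Gain

/-- $5/6$-majority rule for the 3-wise Kemeny scheme, second version. -/
theorem stmt17 {C : Type*} [Fintype C] [DecidableEq C]
    (V : Multiset (Ranking C)) (hV : V ≠ 0)
    (lam s : ℝ) (hlam : 0 < lam) (hs : (5 * lam + 1) / (6 * lam + 1) ≤ s)
    (x : C) (hx : NonDirty V s x)
    (r : Ranking C) (hr : IsKMedian 3 V r)
    (hzx : ∀ z : C, AtLeastRatio V s z x → Before r z x)
    (hcard : lam * ((Finset.univ.filter
        (fun z : C => z ≠ x ∧ AtLeastRatio V s z x)).card : ℝ) ≤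
      ((Finset.univ.filter (fun z : C => Before r x z)).card : ℝ)) :
    ∀ y : C, y ≠ x → AtLeastRatio V s x y → Before r x y := by
  intro y₀ hy₀x hxy₀
  by_contra hy₀
  obtain ⟨y, hy, hymax⟩ :=
    (univ.filter fun z => z ≠ x ∧ AtLeastRatio V s x z ∧ ¬ Before r x z).exists_max_image r
      ⟨y₀, by simp [hy₀x, hxy₀, hy₀]⟩
  simp only [mem_filter, mem_univ, true_and] at hy hymax
  obtain ⟨hyx, hxy, hxy'⟩ := hy
  have hyx' : Before r y x := (not_before_iff hyx.symm).1 hxy'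
  have hbetween : ∀ u, Before r y u → ¬ Before r x u → u = x ∨ AtLeastRatio V s u x :=
    fun u hyu hxu => (eq_or_ne u x).imp_right fun hux =>
      (hx u hux).resolve_left fun hxu' => not_lt_of_ge (hymax u ⟨hux, hxu', hxu⟩) hyu
  have hbelow : ∀ d, Before r x d → AtLeastRatio V s x d :=
    fun d hxd => (hx d hxd.ne.symm).resolve_right fun h => (hzx d h).not_before hxd
  have hs1 := le_one_of_atLeastRatio hV hxy
  have hBD : lam * (candidatesBetween r y x).card ≤ (univ.filter fun d => Before r x d).card := by
    refine le_trans ?_ hcard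
    gcongr
    intro b hb
    simp only [candidatesBetween, mem_filter, mem_univ, true_and] at hb ⊢
    exact ⟨hb.2.ne, (hbetween b hb.1 hb.2.not_before).resolve_left hb.2.ne⟩
  exact not_lt_of_ge (hr _) (kDistV_moveAfter_lt hV hyx'
    (moveMargin_of_atLeastRatio hs1 hxy hbetween hbelow) hs1 hlam hs hBD)
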